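/- arXiv:2007.06538 — 2 statements merged into one kernel-verified Lean document; each statement's English description precedes it below -/
import Mathlib

section
/- Let τ, μ ∈ S_4 each have cycle type (2,2) (products of two disjoint transpositions), and let a, b ∈ (ℤ/2)^4. If a_1 + a_2 + a_3 + a_4 = b_1 + b_2 + b_3 + b_4 in ℤ/2 (in particular, if (a,τ) and (b,μ) are conjugate in W_4), then (a,τ) and (b,μ) are square commutative, i.e. sq((a,τ),(b,μ)) = (b,μ) and sq((b,μ),(a,τ)) = (a,τ). -/
/-- The action of a permutation `σ ∈ S_n` on a vector `a ∈ (ℤ/2)^n`: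
`(σ · a)_i = a_{σ⁻¹ i}`. -/
def permAct {n : ℕ} (σ : Equiv.Perm (Fin n)) (a : Fin n → ZMod 2) : Fin n → ZMod 2 :=
  fun i => a (σ⁻¹ i)

/-- The underlying set of the hyperoctahedral group `W n = (ℤ/2)^n ⋊ S_n`. -/
@[ext]
structure W (n : ℕ) where
  vec : Fin n → ZMod 2
  perm : Equiv.Perm (Fin n)

/-- Group structure of `W n`: `(a,σ)(b,μ) = (a + σ·b, σμ)`. -/
instance (n : ℕ) : Group (W n) where
  mul x y := ⟨x.vec + permAct x.perm y.vec, x.perm * y.perm⟩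
  one := ⟨0, 1⟩
  inv x := ⟨permAct x.perm⁻¹ (-x.vec), x.perm⁻¹⟩
  mul_assoc x y z := by
    refine W.ext ?_ ?_
    · show (x.vec + permAct x.perm y.vec) + permAct (x.perm * y.perm) z.vec
        = x.vec + permAct x.perm (y.vec + permAct y.perm z.vec)
      funext i
      simp [permAct, mul_inv_rev, Equiv.Perm.mul_apply, add_assoc]
    · exact mul_assoc _ _ _
  one_mul x := by
    refine W.ext ?_ ?_
    · show (0 : Fin n → ZMod 2) + permAct 1 x.vec = x.vec
      funext i; simp [permAct]
    · exact one_mul _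
  mul_one x := by
    refine W.ext ?_ ?_
    · show x.vec + permAct x.perm 0 = x.vec
      funext i; simp [permAct]
    · exact mul_one _
  inv_mul_cancel x := by
    refine W.ext ?_ ?_
    · show permAct x.perm⁻¹ (-x.vec) + permAct x.perm⁻¹ x.vec = 0
      funext i; simp only [permAct, Pi.add_apply, Pi.neg_apply, Pi.zero_apply, neg_add_cancel]
    · exact inv_mul_cancel _

@[simp] theorem W.mul_vec {n : ℕ} (x y : W n) :
    (x * y).vec = x.vec + permAct x.perm y.vec := rfl
@[simp] theorem W.mul_perm {n : ℕ} (x y : W n) :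
    (x * y).perm = x.perm * y.perm := rfl
@[simp] theorem W.one_vec {n : ℕ} : (1 : W n).vec = 0 := rfl
@[simp] theorem W.one_perm {n : ℕ} : (1 : W n).perm = 1 := rfl
@[simp] theorem W.inv_vec {n : ℕ} (x : W n) :
    (x⁻¹).vec = permAct x.perm⁻¹ (-x.vec) := rfl
@[simp] theorem W.inv_perm {n : ℕ} (x : W n) : (x⁻¹).perm = x.perm⁻¹ := rfl

/-- Conjugation `x ▷ y = x y x⁻¹` in a group. -/
def conjAct' {G : Type*} [Group G] (x y : G) : G := x * y * x⁻¹

/-- `sq(x,y) = x ▷ (y ▷ (x ▷ y))`. -/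
def sqD {G : Type*} [Group G] (x y : G) : G := conjAct' x (conjAct' y (conjAct' x y))

/-- Conjugacy class of `x` in the group `G`. -/
def conjClass {G : Type*} [Group G] (x : G) : Set G := {y | ∃ t : G, y = t * x * t⁻¹}

/-- A subset `O` of a group is of type D. -/
def IsTypeD {G : Type*} [Group G] (O : Set G) : Prop :=
  ∃ R S : Set G, R ⊆ O ∧ S ⊆ O ∧ R.Nonempty ∧ S.Nonempty ∧ Disjoint R S ∧
    (∀ r ∈ R, ∀ r' ∈ R, conjAct' r r' ∈ R) ∧
    (∀ s ∈ S, ∀ s' ∈ S, conjAct' s s' ∈ S) ∧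
    (∀ r ∈ R, ∀ s ∈ S, conjAct' r s ∈ S ∧ conjAct' s r ∈ R) ∧
    (∃ a ∈ R, ∃ b ∈ S, sqD a b ≠ b)

/-- The subgroup `K_n ⋊ S_n` of `W n`, where `K_n = {a : a_1 + ⋯ + a_n = 0}`. -/
def Ksub (n : ℕ) : Subgroup (W n) where
  carrier := {x | ∑ i, x.vec i = 0}
  one_mem' := by simp
  mul_mem' := by
    intro x y hx hy
    simp only [Set.mem_setOf_eq] at *
    rw [W.mul_vec]
    simp only [Pi.add_apply, Finset.sum_add_distrib, hx, zero_add, permAct]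
    rw [Equiv.sum_comp x.perm⁻¹ y.vec]
    exact hy
  inv_mem' := by
    intro x hx
    simp only [Set.mem_setOf_eq] at *
    rw [W.inv_vec]
    simp only [permAct, inv_inv, Pi.neg_apply]
    rw [Finset.sum_neg_distrib, Equiv.sum_comp x.perm x.vec, hx, neg_zero]

/-! The permutations `τ, μ` lie in the Klein four-group `V ⊂ S_4`, so they are commuting
involutions. For `x = (a, τ)`, `y = (b, μ)` this makes `(xy)² = (yx)²` a statement about vectors
only, and over `ℤ/2` the two vectors differ by `∑_{σ ∈ {1, τ, μ, τμ}} σ · (a + b)`. If `τ = μ`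
each term occurs twice; otherwise `V` acts simply transitively on `{1, 2, 3, 4}`, so every
coordinate of that sum is `∑ᵢ (aᵢ + bᵢ) = 0`. And `(xy)² = (yx)²` is a rearrangement of
`sq(x, y) = y`. -/

theorem sqD_eq_right_of_sq_mul_eq {G : Type*} [Group G] {x y : G}
    (h : (x * y) ^ 2 = (y * x) ^ 2) : sqD x y = y :=
  calc sqD x y = (x * y) ^ 2 * (x * y * x)⁻¹ := by simp only [sqD, conjAct', pow_two]; group
    _ = y := by rw [h, pow_two]; group

theorem List.sum_map_eq_sum_univ_of_nodup {α M : Type*} [Fintype α] [DecidableEq α]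
    [AddCommMonoid M] {l : List α} (hl : l.Nodup) (hlen : l.length = Fintype.card α)
    (f : α → M) : (l.map f).sum = ∑ x, f x := by
  have huniv : l.toFinset = Finset.univ :=
    Finset.eq_univ_of_card _ (by rw [List.toFinset_card_of_nodup hl, hlen])
  rw [← List.sum_toFinset f hl, huniv]

namespace Equiv.Perm

variable {α : Type*} [Fintype α] [DecidableEq α]

theorem mul_self_eq_one_of_cycleType_eq_two_two {σ : Perm α} (h : σ.cycleType = {2, 2}) :
    σ * σ = 1 := by
  have horder : orderOf σ = 2 := by rw [← lcm_cycleType, h]; rfl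
  rw [← pow_two, ← horder, pow_orderOf_eq_one]

theorem apply_ne_self_of_sum_cycleType_eq_card {σ : Perm α}
    (h : σ.cycleType.sum = Fintype.card α) (x : α) : σ x ≠ x := by
  have hsupp : σ.support = Finset.univ := Finset.eq_univ_of_card _ (by rw [← sum_cycleType, h])
  exact mem_support.mp (hsupp ▸ Finset.mem_univ x)

end Equiv.Perm

theorem fin_four_commute_of_involutions {τ μ : Equiv.Perm (Fin 4)} (hτ : τ * τ = 1)
    (hμ : μ * μ = 1) (hτ' : ∀ i, τ i ≠ i) (hμ' : ∀ i, μ i ≠ i) : τ * μ = μ * τ := by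
  revert τ μ; decide

set_option synthInstance.maxSize 512 in
theorem fin_four_orbit_nodup {τ μ : Equiv.Perm (Fin 4)} (hτ : τ * τ = 1) (hμ : μ * μ = 1)
    (hτ' : ∀ i, τ i ≠ i) (hμ' : ∀ i, μ i ≠ i) (hne : τ ≠ μ) (i : Fin 4) :
    [i, τ i, μ i, τ (μ i)].Nodup := by
  revert τ μ i; decide

theorem W.sq_mul_comm_of_orbit_sum_eq_zero {n : ℕ} {a b : Fin n → ZMod 2}
    {τ μ : Equiv.Perm (Fin n)} (hτ : τ * τ = 1) (hμ : μ * μ = 1) (hτμ : τ * μ = μ * τ)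
    (h : ∀ i, (a + b) i + (a + b) (τ i) + (a + b) (μ i) + (a + b) (τ (μ i)) = 0) :
    (W.mk a τ * W.mk b μ) ^ 2 = (W.mk b μ * W.mk a τ) ^ 2 := by
  have hτinv : τ⁻¹ = τ := inv_eq_of_mul_eq_one_right hτ
  have hμinv : μ⁻¹ = μ := inv_eq_of_mul_eq_one_right hμ
  have hττ (j : Fin n) : τ (τ j) = j := by rw [← Equiv.Perm.mul_apply, hτ, Equiv.Perm.one_apply]
  have hμμ (j : Fin n) : μ (μ j) = j := by rw [← Equiv.Perm.mul_apply, hμ, Equiv.Perm.one_apply]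
  have hμτ (j : Fin n) : μ (τ j) = τ (μ j) := by
    rw [← Equiv.Perm.mul_apply, ← hτμ, Equiv.Perm.mul_apply]
  refine W.ext (funext fun i => ?_) (by simp only [pow_two, W.mul_perm, hτμ])
  simp only [pow_two, W.mul_vec, W.mul_perm, permAct, mul_inv_rev, hτinv, hμinv,
    Equiv.Perm.mul_apply, Pi.add_apply, hμτ, hττ, hμμ]
  simp only [Pi.add_apply] at h
  -- in characteristic 2 the two sides differ by the orbit sum `h i`
  linear_combination (norm := ring_nf) h i
  reduce_mod_char

theorem fin_four_orbit_sum_eq_zero {τ μ : Equiv.Perm (Fin 4)} (hτ : τ * τ = 1) (hμ : μ * μ = 1)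
    (hτ' : ∀ i, τ i ≠ i) (hμ' : ∀ i, μ i ≠ i) {c : Fin 4 → ZMod 2} (hc : ∑ i, c i = 0)
    (i : Fin 4) :
    c i + c (τ i) + c (μ i) + c (τ (μ i)) = 0 := by
  by_cases hne : τ = μ
  · subst hne
    rw [← Equiv.Perm.mul_apply, hτ, Equiv.Perm.one_apply]
    ring_nf
    reduce_mod_char
  · rw [← hc, ← List.sum_map_eq_sum_univ_of_nodup (fin_four_orbit_nodup hτ hμ hτ' hμ' hne i) rfl]
    simp only [List.map_cons, List.map_nil, List.sum_cons, List.sum_nil, add_zero, add_assoc]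

/-- for `τ, μ ∈ S_4` of cycle type `(2,2)`, if
`a₁+a₂+a₃+a₄ = b₁+b₂+b₃+b₄` then `(a,τ)` and `(b,μ)` are square commutative. -/
theorem square_commutative_22 (τ μ : Equiv.Perm (Fin 4))
    (hτ : τ.cycleType = {2, 2}) (hμ : μ.cycleType = {2, 2})
    (a b : Fin 4 → ZMod 2) (hsum : ∑ i, a i = ∑ i, b i) :
    sqD (W.mk a τ) (W.mk b μ) = W.mk b μ ∧
      sqD (W.mk b μ) (W.mk a τ) = W.mk a τ := by
  have hτ2 := Equiv.Perm.mul_self_eq_one_of_cycleType_eq_two_two hτ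
  have hμ2 := Equiv.Perm.mul_self_eq_one_of_cycleType_eq_two_two hμ
  have hτ' := Equiv.Perm.apply_ne_self_of_sum_cycleType_eq_card (by rw [hτ]; rfl)
  have hμ' := Equiv.Perm.apply_ne_self_of_sum_cycleType_eq_card (by rw [hμ]; rfl)
  have hab : ∑ i, (a + b) i = 0 := by
    simp only [Pi.add_apply, Finset.sum_add_distrib, hsum, CharTwo.add_self_eq_zero]
  have key := W.sq_mul_comm_of_orbit_sum_eq_zero hτ2 hμ2
    (fin_four_commute_of_involutions hτ2 hμ2 hτ' hμ') (fin_four_orbit_sum_eq_zero hτ2 hμ2 hτ' hμ' hab)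
  exact ⟨sqD_eq_right_of_sq_mul_eq key, sqD_eq_right_of_sq_mul_eq key.symm⟩
end

section
/- Let n ≥ 2 and let τ, μ ∈ S_n be conjugate in S_n with sq(τ,μ) ≠ μ and τ(n) = μ(n) = n. Let a ∈ (ℤ/2)^n and suppose there exists i with τ(i) = i, μ(i) = i and a_i ≠ a_n. Let H be either W_n or the subgroup K_n ⋊ S_n, and suppose (a,τ) ∈ H. Then the conjugacy class of (a,τ) in H is of type D. -/
/-! Let `R` and `S` be the elements of the class whose permutation fixes the last point `N`, split
by their sign at `N`. Conjugation by an element fixing `N` preserves both that property and the sign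
at `N`, which gives all the closure conditions, and `a_i ≠ a_N` keeps `R` and `S` apart. Conjugating
`(a,τ)` by a pure permutation `π` with `π τ π⁻¹ = μ` and `π i = N` (any conjugator composed with the
transposition of two fixed points of `τ`) lands in `S`, and projecting `sq` to `S_n` shows that it
moves this element. -/

section TypeD

variable {G : Type*} [Group G]

theorem map_conjAct' {H F : Type*} [Group H] [FunLike F G H] [MonoidHomClass F G H] (f : F)
    (x y : G) : f (conjAct' x y) = conjAct' (f x) (f y) := by
  simp [conjAct']

theorem map_sqD {H F : Type*} [Group H] [FunLike F G H] [MonoidHomClass F G H] (f : F)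
    (x y : G) : f (sqD x y) = sqD (f x) (f y) := by
  simp only [sqD, map_conjAct']

theorem Subgroup.coe_conjAct' (H : Subgroup G) (x y : H) :
    ((conjAct' x y : H) : G) = conjAct' (x : G) y :=
  map_conjAct' H.subtype x y

theorem Subgroup.coe_sqD (H : Subgroup G) (x y : H) : ((sqD x y : H) : G) = sqD (x : G) y :=
  map_sqD H.subtype x y

theorem conjAct'_mem_conjClass {x y z : G} (hz : z ∈ conjClass x) :
    conjAct' y z ∈ conjClass x := by
  obtain ⟨t, rfl⟩ := hz
  exact ⟨y * t, by simp only [conjAct', mul_inv_rev, mul_assoc]⟩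

theorem mem_conjClass_self (x : G) : x ∈ conjClass x :=
  ⟨1, by simp⟩

theorem isTypeD_of_conjAct'_invariant {β : Type*} {O C : Set G} (hCO : C ⊆ O)
    (hC : ∀ x ∈ C, ∀ y ∈ C, conjAct' x y ∈ C) (f : G → β)
    (hf : ∀ x ∈ C, ∀ y ∈ C, f (conjAct' x y) = f y) {r s : G} (hr : r ∈ C) (hs : s ∈ C)
    (hrs : f r ≠ f s) (hsq : sqD r s ≠ s) : IsTypeD O := by
  have fibre_closed : ∀ x ∈ C, ∀ y ∈ C, ∀ b, f y = b → conjAct' x y ∈ {z ∈ C | f z = b} :=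
    fun x hx y hy b hb => ⟨hC x hx y hy, (hf x hx y hy).trans hb⟩
  refine ⟨{z ∈ C | f z = f r}, {z ∈ C | f z = f s}, fun z hz => hCO hz.1, fun z hz => hCO hz.1,
    ⟨r, hr, rfl⟩, ⟨s, hs, rfl⟩, ?_, ?_, ?_, ?_, ⟨r, ⟨hr, rfl⟩, s, ⟨hs, rfl⟩, hsq⟩⟩
  · exact Set.disjoint_left.2 fun z hzr hzs => hrs (hzr.2.symm.trans hzs.2)
  · exact fun x hx y hy => fibre_closed x hx.1 y hy.1 _ hy.2
  · exact fun x hx y hy => fibre_closed x hx.1 y hy.1 _ hy.2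
  · exact fun x hx y hy => ⟨fibre_closed x hx.1 y hy.1 _ hy.2, fibre_closed y hy.1 x hx.1 _ hx.2⟩

end TypeD

theorem Equiv.Perm.exists_conj_eq_apply_eq {α : Type*} [DecidableEq α] {τ μ : Equiv.Perm α}
    (hconj : IsConj τ μ) {i N : α} (hτi : τ i = i) (hμN : μ N = N) :
    ∃ π : Equiv.Perm α, π * τ * π⁻¹ = μ ∧ π i = N := by
  obtain ⟨σ, hσ⟩ := isConj_iff.mp hconj
  have hτj : τ (σ⁻¹ N) = σ⁻¹ N := by
    rwa [← hσ, Equiv.Perm.mul_apply, Equiv.Perm.mul_apply, ← Equiv.Perm.eq_inv_iff_eq] at hμN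
  have hcomm : τ * Equiv.swap (σ⁻¹ N) i = Equiv.swap (σ⁻¹ N) i * τ := by
    rw [Equiv.mul_swap_eq_swap_mul, hτj, hτi]
  refine ⟨σ * Equiv.swap (σ⁻¹ N) i, ?_, by simp⟩
  calc σ * Equiv.swap (σ⁻¹ N) i * τ * (σ * Equiv.swap (σ⁻¹ N) i)⁻¹
      = σ * (Equiv.swap (σ⁻¹ N) i * τ * (Equiv.swap (σ⁻¹ N) i)⁻¹) * σ⁻¹ := by group
    _ = μ := by rw [← hcomm, mul_inv_cancel_right, hσ]

namespace W

variable {n : ℕ}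

def permHom (n : ℕ) : W n →* Equiv.Perm (Fin n) where
  toFun := W.perm
  map_one' := rfl
  map_mul' _ _ := rfl

theorem perm_sqD (x y : W n) : (sqD x y).perm = sqD x.perm y.perm :=
  map_sqD (permHom n) x y

theorem conjAct'_mk_zero (π τ : Equiv.Perm (Fin n)) (a : Fin n → ZMod 2) :
    conjAct' (W.mk 0 π) (W.mk a τ) = W.mk (permAct π a) (π * τ * π⁻¹) := by
  ext i <;> simp [conjAct', permAct]

theorem mk_zero_mem_Ksub (π : Equiv.Perm (Fin n)) : W.mk 0 π ∈ Ksub n := by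
  show ∑ i, (0 : Fin n → ZMod 2) i = 0
  simp

variable {N : Fin n} {x y : W n}

theorem conjAct'_perm_apply_of_fixed (hx : x.perm N = N) (hy : y.perm N = N) :
    (conjAct' x y).perm N = N := by
  have hx' : x.perm⁻¹ N = N := by rw [Equiv.Perm.inv_eq_iff_eq, hx]
  simp only [conjAct', mul_perm, inv_perm, Equiv.Perm.mul_apply, hx', hy, hx]

theorem conjAct'_vec_apply_of_fixed (hx : x.perm N = N) (hy : y.perm N = N) :
    (conjAct' x y).vec N = y.vec N := by
  have hx' : x.perm⁻¹ N = N := by rw [Equiv.Perm.inv_eq_iff_eq, hx]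
  have hy' : y.perm⁻¹ N = N := by rw [Equiv.Perm.inv_eq_iff_eq, hy]
  simp only [conjAct', mul_vec, inv_vec, mul_perm, permAct, Pi.add_apply, Pi.neg_apply,
    mul_inv_rev, Equiv.Perm.mul_apply, inv_inv, hx', hy', hx]
  ring

end W

/-- if `τ, μ ∈ S_n` are conjugate with `sq(τ,μ) ≠ μ` and both fix
the last point `n`, and `a_i ≠ a_n` for some common fixed point `i`, then the
conjugacy class of `(a,τ)` in `H` (where `H` is `W n` or `K_n ⋊ S_n`) is of
type D. -/
theorem typeD_of_nonsquare (n : ℕ) (hn : 2 ≤ n) (τ μ : Equiv.Perm (Fin n))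
    (hconj : IsConj τ μ) (hsq : sqD τ μ ≠ μ)
    (hτn : τ ⟨n - 1, by omega⟩ = ⟨n - 1, by omega⟩)
    (hμn : μ ⟨n - 1, by omega⟩ = ⟨n - 1, by omega⟩)
    (a : Fin n → ZMod 2)
    (hi : ∃ i : Fin n, τ i = i ∧ μ i = i ∧ a i ≠ a ⟨n - 1, by omega⟩)
    (H : Subgroup (W n)) (hH : H = ⊤ ∨ H = Ksub n)
    (hw : W.mk a τ ∈ H) :
    IsTypeD (conjClass (⟨W.mk a τ, hw⟩ : H)) := by
  set N : Fin n := ⟨n - 1, by omega⟩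
  obtain ⟨i, hτi, -, hai⟩ := hi
  obtain ⟨π, rfl, hπi⟩ := Equiv.Perm.exists_conj_eq_apply_eq hconj hτi hμn
  have hπH : W.mk 0 π ∈ H := by
    rcases hH with rfl | rfl
    exacts [Subgroup.mem_top _, W.mk_zero_mem_Ksub π]
  set x : H := ⟨W.mk a τ, hw⟩
  have hs : ((conjAct' ⟨W.mk 0 π, hπH⟩ x : H) : W n) = W.mk (permAct π a) (π * τ * π⁻¹) :=
    (H.coe_conjAct' _ _).trans (W.conjAct'_mk_zero π τ a)
  refine isTypeD_of_conjAct'_invariant (C := {z | z ∈ conjClass x ∧ (z : W n).perm N = N})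
    (fun z hz => hz.1) (fun y hy z hz => ⟨conjAct'_mem_conjClass hz.1, ?_⟩)
    (fun z : H => (z : W n).vec N) (fun y hy z hz => ?_) (r := x) ⟨mem_conjClass_self x, hτn⟩
    ⟨conjAct'_mem_conjClass (mem_conjClass_self x), by rw [hs]; exact hμn⟩ ?_ fun h => hsq ?_
  · rw [H.coe_conjAct']
    exact W.conjAct'_perm_apply_of_fixed hy.2 hz.2
  · rw [H.coe_conjAct']
    exact W.conjAct'_vec_apply_of_fixed hy.2 hz.2
  · simpa [hs, permAct, ← hπi] using hai.symm
  · have := congrArg (fun z : H => (z : W n).perm) h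
    rwa [H.coe_sqD, W.perm_sqD, hs] at this
end
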